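/- arXiv:math/0304416 — 7 statements merged into one kernel-verified Lean document; each statement's English description precedes it below -/
import Mathlib

section
/- Let 0 < C, ρ < ∞ be real constants, let D : ℕ → ℝ be a nonnegative sequence, and define G_n = Σ_{k=0}^n binom(n,k)·C^k·D_{n−k}. Assume G_n > 0 for all n and n·G_{n−1}/G_n → ρ as n → ∞. Then for every fixed k ≥ 0, the ratio (binom(n,k)·C^k·D_{n−k})/G_n converges to e^{−Cρ}·(Cρ)^k/k! as n → ∞. -/
/-!
Writing `G = T_C D` for the binomial transform `(T_a F)(n) = ∑ᵢ (n choose i) aⁱ F(n - i)`,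
exponential generating functions turn `T_a` into multiplication by `e^{aX}`, so `T_{-C}` inverts
`T_C` and `D = T_{-C} G`. Substituting this into `(n choose k) Cᵏ D(n - k) / G(n)` gives the exact
expansion `Cᵏ/k! · ∑ᵢ (-C)ⁱ/i! · (n)_{k+i} G(n-k-i)/G(n)`, where the falling factorial ratio
`(n)_r G(n-r)/G(n)` is the product of the `r` ratios `m G(m-1)/G(m)` for `m = n, …, n-r+1`. Each of
these tends to `ρ` and, being a convergent sequence, is bounded by some `M`; so the `r`-th ratio
tends to `ρʳ` and is bounded by `Mʳ`, and dominated convergence (Tannery's theorem) turns the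
expansion into `Cᵏ/k! · ρᵏ e^{-Cρ}`.
-/

open Finset Filter Topology

open scoped Nat

section BinomialTransform

variable {K : Type*} [Semiring K]

def binomialTransform (a : K) (F : ℕ → K) (n : ℕ) : K :=
  ∑ i ∈ range (n + 1), (n.choose i : K) * a ^ i * F (n - i)

theorem binomialTransform_zero (F : ℕ → K) : binomialTransform 0 F = F := by
  ext n
  rw [binomialTransform, sum_eq_single 0 (fun i _ hi => by simp [hi]) (by simp)]
  simp

end BinomialTransform

section ExponentialGeneratingFunction

variable {K : Type*} [Field K] [CharZero K]

def egf (F : ℕ → K) : PowerSeries K := PowerSeries.mk fun n => F n / n !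

theorem egf_injective : Function.Injective (egf (K := K)) := by
  intro F H h
  ext n
  have hn := congrArg (PowerSeries.coeff n) h
  simp only [egf, PowerSeries.coeff_mk] at hn
  exact (div_left_inj' (Nat.cast_ne_zero.2 n.factorial_ne_zero)).1 hn

theorem egf_binomialTransform (a : K) (F : ℕ → K) :
    egf (binomialTransform a F) = PowerSeries.rescale a (PowerSeries.exp K) * egf F := by
  ext n
  simp only [egf, binomialTransform, PowerSeries.coeff_mk, PowerSeries.coeff_mul,
    PowerSeries.coeff_rescale, PowerSeries.coeff_exp, Nat.sum_antidiagonal_eq_sum_range_succ_mk,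
    sum_div, map_div₀, map_one, map_natCast]
  refine sum_congr rfl fun i hi => ?_
  rw [Nat.cast_choose K (mem_range_succ_iff.1 hi)]
  field_simp [Nat.factorial_ne_zero]

theorem binomialTransform_binomialTransform (a b : K) (F : ℕ → K) :
    binomialTransform a (binomialTransform b F) = binomialTransform (a + b) F :=
  egf_injective <| by
    rw [egf_binomialTransform, egf_binomialTransform, egf_binomialTransform, ← mul_assoc,
      PowerSeries.exp_mul_exp_eq_exp_add]

theorem binomialTransform_neg_binomialTransform (a : K) (F : ℕ → K) :
    binomialTransform (-a) (binomialTransform a F) = F := by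
  rw [binomialTransform_binomialTransform, neg_add_cancel, binomialTransform_zero]

end ExponentialGeneratingFunction

theorem Nat.choose_mul_choose_sub_mul_factorial_mul_factorial (n k i : ℕ) :
    n.choose k * (n - k).choose i * (k ! * i !) = n.descFactorial (k + i) := by
  rw [← Nat.descFactorial_mul_descFactorial (Nat.le_add_right k i), Nat.add_sub_cancel_left,
    Nat.descFactorial_eq_factorial_mul_choose, Nat.descFactorial_eq_factorial_mul_choose]
  ring

theorem choose_mul_pow_mul_div_eq_sum {K : Type*} [Field K] [CharZero K] {C : K} {D G : ℕ → K}
    (hG : G = binomialTransform C D) (n k : ℕ) :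
    (n.choose k : K) * C ^ k * D (n - k) / G n = C ^ k / k ! *
      ∑ i ∈ range (n - k + 1),
        (-C) ^ i / i ! * ((n.descFactorial (k + i) : K) * G (n - (k + i)) / G n) := by
  rw [← binomialTransform_neg_binomialTransform C D, ← hG, binomialTransform, mul_sum, mul_sum,
    sum_div]
  refine sum_congr rfl fun i _ => ?_
  rw [← Nat.choose_mul_choose_sub_mul_factorial_mul_factorial, Nat.sub_add_eq]
  push_cast
  field_simp [Nat.factorial_ne_zero]

section DescFactorialRatio

variable {K : Type*} [NormedField K] {G : ℕ → K}

theorem descFactorial_mul_div_eq_prod (hG : ∀ n, G n ≠ 0) (n r : ℕ) :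
    (n.descFactorial r : K) * G (n - r) / G n =
      ∏ i ∈ range r, ((n - i : ℕ) : K) * G (n - i - 1) / G (n - i) := by
  induction r with
  | zero => simp [hG n]
  | succ r ih =>
    rw [prod_range_succ, ← ih, Nat.descFactorial_succ, Nat.sub_succ', Nat.cast_mul]
    field_simp [hG (n - r)]

theorem tendsto_descFactorial_mul_div (hG : ∀ n, G n ≠ 0) {ρ : K}
    (hlim : Tendsto (fun n : ℕ => (n : K) * G (n - 1) / G n) atTop (𝓝 ρ)) (r : ℕ) :
    Tendsto (fun n : ℕ => (n.descFactorial r : K) * G (n - r) / G n) atTop (𝓝 (ρ ^ r)) := by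
  simp_rw [descFactorial_mul_div_eq_prod hG]
  simpa using tendsto_finsetProd (range r) fun i _ => hlim.comp (tendsto_sub_atTop_nat i)

theorem norm_descFactorial_mul_div_le (hG : ∀ n, G n ≠ 0) {M : ℝ}
    (hM : ∀ n : ℕ, ‖(n : K) * G (n - 1) / G n‖ ≤ M) (n r : ℕ) :
    ‖(n.descFactorial r : K) * G (n - r) / G n‖ ≤ M ^ r := by
  rw [descFactorial_mul_div_eq_prod hG, norm_prod]
  simpa using prod_le_prod (s := range r) (fun _ _ => norm_nonneg _) fun i _ => hM (n - i)

end DescFactorialRatio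

theorem tendsto_tsum_pow_div_factorial_mul {a : ℕ → ℕ → ℝ} {ρ M : ℝ}
    (ha : ∀ r, Tendsto (fun n => a n r) atTop (𝓝 (ρ ^ r))) (hM : ∀ n r, ‖a n r‖ ≤ M ^ r)
    (x : ℝ) (k : ℕ) :
    Tendsto (fun n => ∑' i, x ^ i / i ! * a n (k + i)) atTop (𝓝 (ρ ^ k * Real.exp (x * ρ))) := by
  have hsum : ∑' i, x ^ i / i ! * ρ ^ (k + i) = ρ ^ k * Real.exp (x * ρ) := by
    rw [Real.exp_eq_exp_ℝ, ← ((NormedSpace.expSeries_div_hasSum_exp (x * ρ)).mul_left _).tsum_eq]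
    congr 1 with i
    ring
  rw [← hsum]
  refine tendsto_tsum_of_dominated_convergence
    ((Real.summable_pow_div_factorial (|x| * M)).mul_left (M ^ k))
    (fun i => (ha (k + i)).const_mul _) (.of_forall fun n i => ?_)
  calc ‖x ^ i / i ! * a n (k + i)‖ = |x| ^ i / i ! * ‖a n (k + i)‖ := by simp
    _ ≤ |x| ^ i / i ! * M ^ (k + i) := by gcongr; exact hM n _
    _ = M ^ k * ((|x| * M) ^ i / i !) := by ring

theorem poisson_lemma_general (C ρ : ℝ)
    (D : ℕ → ℝ)
    (G : ℕ → ℝ)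
    (hG : ∀ n, G n = ∑ k ∈ Finset.range (n + 1), (n.choose k : ℝ) * C ^ k * D (n - k))
    (hGpos : ∀ n, 0 < G n)
    (hlim : Tendsto (fun n : ℕ => (n : ℝ) * G (n - 1) / G n) atTop (nhds ρ)) :
    ∀ k : ℕ, Tendsto (fun n : ℕ => ((n.choose k : ℝ) * C ^ k * D (n - k)) / G n) atTop
      (nhds (Real.exp (-(C * ρ)) * (C * ρ) ^ k / (k.factorial : ℝ))) := by
  intro k
  have hG0 (n : ℕ) : G n ≠ 0 := (hGpos n).ne'
  obtain ⟨M, hM⟩ := isBounded_iff_forall_norm_le.1 (Metric.isBounded_range_of_tendsto _ hlim)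
  have hexpand (n : ℕ) : (n.choose k : ℝ) * C ^ k * D (n - k) / G n = C ^ k / k ! *
      ∑' i, (-C) ^ i / i ! * ((n.descFactorial (k + i) : ℝ) * G (n - (k + i)) / G n) := by
    rw [choose_mul_pow_mul_div_eq_sum (funext hG), tsum_eq_sum fun i hi => ?_]
    rw [mem_range] at hi
    simp [Nat.descFactorial_eq_zero_iff_lt.2 (by omega : n < k + i)]
  simp_rw [hexpand]
  convert (tendsto_tsum_pow_div_factorial_mul (tendsto_descFactorial_mul_div hG0 hlim)
    (norm_descFactorial_mul_div_le hG0 (Set.forall_mem_range.1 hM)) (-C) k).const_mul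
    (C ^ k / k !) using 2
  rw [neg_mul]
  ring

/-- Lemma (Poisson): if `G_{n,K} = C^{|K|} D_{n-|K|}` (so that
`G_{n,k} = C(n,k) C^k D_{n-k}` and `G_n = Σ_k C(n,k) C^k D_{n-k}`) and
`n G_{n-1}/G_n → ρ`, then `G_{n,k}/G_n → e^{-Cρ} (Cρ)^k / k!` for every fixed `k`. -/
theorem poisson_lemma (C ρ : ℝ) (hC : 0 < C) (hρ : 0 < ρ)
    (D : ℕ → ℝ) (hD : ∀ n, 0 ≤ D n)
    (G : ℕ → ℝ)
    (hG : ∀ n, G n = ∑ k ∈ Finset.range (n + 1), (n.choose k : ℝ) * C ^ k * D (n - k))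
    (hGpos : ∀ n, 0 < G n)
    (hlim : Tendsto (fun n : ℕ => (n : ℝ) * G (n - 1) / G n) atTop (nhds ρ)) :
    ∀ k : ℕ, Tendsto (fun n : ℕ => ((n.choose k : ℝ) * C ^ k * D (n - k)) / G n) atTop
      (nhds (Real.exp (-(C * ρ)) * (C * ρ) ^ k / (k.factorial : ℝ))) :=
  poisson_lemma_general C ρ D G hG hGpos hlim
end

section
/- For every integer k ≥ 2, the function α ↦ c_k(α) is continuous on the interval (0, ∞). -/
open Finset Set

/-- `ck k α = Σ_{j ∈ ℕ, 0 ≤ j < α} (-1)^j C(k,j) (1 - j/α)^{k-1}` (empty when `α ≤ 0`). -/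
noncomputable def ck (k : ℕ) (α : ℝ) : ℝ :=
  ∑ j ∈ Finset.range ⌈α⌉₊, (-1 : ℝ) ^ j * (k.choose j : ℝ) * (1 - (j : ℝ) / α) ^ (k - 1)

noncomputable def ckAux (k N : ℕ) (α : ℝ) : ℝ :=
  ∑ j ∈ Finset.range N, (-1 : ℝ) ^ j * (k.choose j : ℝ) * (max (1 - (j : ℝ) / α) 0) ^ (k - 1)

lemma ck_eq_ckAux (k : ℕ) (hk : 2 ≤ k) {N : ℕ} {α : ℝ} (hα : 0 < α) (hN : ⌈α⌉₊ ≤ N) :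
    ck k α = ckAux k N α := by
  unfold ck ckAux
  rw [← Finset.sum_range_add_sum_Ico _ hN]
  have h2 : ∑ j ∈ Finset.Ico ⌈α⌉₊ N,
      (-1 : ℝ) ^ j * (k.choose j : ℝ) * (max (1 - (j : ℝ) / α) 0) ^ (k - 1) = 0 := by
    apply Finset.sum_eq_zero
    intro j hj
    simp only [Finset.mem_Ico] at hj
    have hja : α ≤ (j : ℝ) := le_trans (Nat.le_ceil α) (by exact_mod_cast hj.1)
    have : max (1 - (j : ℝ) / α) 0 = 0 := by
      apply max_eq_right
      have : 1 ≤ (j : ℝ) / α := (one_le_div hα).mpr hja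
      linarith
    rw [this, zero_pow (by omega)]
    ring
  rw [h2, add_zero]
  apply Finset.sum_congr rfl
  intro j hj
  simp only [Finset.mem_range] at hj
  have hja : (j : ℝ) < α := by
    have : (j : ℝ) < ⌈α⌉₊ := by exact_mod_cast hj
    by_contra h
    push_neg at h
    have : ⌈α⌉₊ ≤ j := Nat.ceil_le.mpr h
    omega
  have : 0 ≤ 1 - (j : ℝ) / α := by
    have : (j : ℝ) / α < 1 := (div_lt_one hα).mpr hja
    linarith
  rw [max_eq_left this]

/-- For every integer `k ≥ 2`, `α ↦ c_k(α)` is continuous on `(0, ∞)`. -/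
theorem ck_continuousOn (k : ℕ) (hk : 2 ≤ k) :
    ContinuousOn (fun α : ℝ => ck k α) (Set.Ioi (0 : ℝ)) := by
  apply continuousOn_of_forall_continuousAt
  intro α₀ hα₀
  simp only [Set.mem_Ioi] at hα₀
  set N := ⌈α₀⌉₊ + 1 with hNdef
  have haux : ContinuousAt (fun α => ckAux k N α) α₀ := by
    unfold ckAux
    apply tendsto_finset_sum
    intro j _
    apply ContinuousAt.mul continuousAt_const
    apply ContinuousAt.pow
    exact (ContinuousAt.sub continuousAt_const
      (ContinuousAt.div continuousAt_const continuousAt_id (ne_of_gt hα₀))).max continuousAt_const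
  apply haux.congr
  have hopen : IsOpen {α : ℝ | 0 < α ∧ α < α₀ + 1} := by
    have : {α : ℝ | 0 < α ∧ α < α₀ + 1} = Set.Ioo 0 (α₀ + 1) := rfl
    rw [this]; exact isOpen_Ioo
  have hmem : α₀ ∈ {α : ℝ | 0 < α ∧ α < α₀ + 1} := ⟨hα₀, by linarith⟩
  filter_upwards [hopen.mem_nhds hmem] with α hα
  exact (ck_eq_ckAux k hk hα.1 (by
    have : ⌈α⌉₊ ≤ ⌈α₀ + 1⌉₊ := Nat.ceil_le_ceil (le_of_lt hα.2)
    have h2 : ⌈α₀ + 1⌉₊ = ⌈α₀⌉₊ + 1 := by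
      rw [Nat.ceil_add_one (le_of_lt hα₀)]
    omega)).symm
end

section
/- For every integer k ≥ 2, the function α ↦ c_k(α) is strictly decreasing on the interval [1, k], and 0 < c_k(α) ≤ 1 for all real α with 0 < α < k. -/
open Finset Set

/-!
`bspline m x = Σ_j (-1)^j C(m,j) (x - j)₊^(m-1)` is `(m-1)!` times the cardinal B-spline of
order `m`, and `c_k(α) = bspline k α / α^(k-1)` for `α > 0`. Pascal's rule gives
`bspline (m+1)' = m (bspline m x - bspline m (x-1))` and, together with
`j C(m+1,j) = (m+1) C(m,j-1)`, the Cox–de Boor recurrence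
`bspline (m+1) x = x bspline m x + (m+1-x) bspline m (x-1)`. By induction from the hat function
`bspline 2`, the recurrence shows that `bspline m` vanishes outside `(0, m)` and is positive
inside. In the quotient rule for `bspline (m+1) x / x^m` the recurrence collapses the numerator
to `-m (m+1) x^(m-1) bspline m (x-1) < 0` on `(1, m+1)`. Finally `c_k = 1` on `(0, 1]`, so
`c_k ≤ 1` follows from the monotonicity.
-/

section AlternatingChoose
variable {R : Type*} [CommRing R]

theorem sum_range_alternating_choose_succ (m : ℕ) (f : ℕ → R) :
    ∑ j ∈ range (m + 2), (-1) ^ j * ((m + 1).choose j : R) * f j =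
      ∑ j ∈ range (m + 1), (-1) ^ j * (m.choose j : R) * (f j - f (j + 1)) := by
  have h := sum_choose_succ_mul (fun i _ => (-1 : R) ^ i * f i) m
  simp only [mul_sub, sum_sub_distrib]
  convert h using 1
  · exact sum_congr rfl fun j _ => by ring
  · rw [sub_eq_add_neg, ← sum_neg_distrib]
    congr 1 <;> exact sum_congr rfl fun j _ => by ring

theorem sum_range_alternating_choose_succ_mul_index (m : ℕ) (f : ℕ → R) :
    ∑ j ∈ range (m + 2), (-1) ^ j * ((m + 1).choose j : R) * (j * f j) =
      -(m + 1) * ∑ j ∈ range (m + 1), (-1) ^ j * (m.choose j : R) * f (j + 1) := by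
  rw [sum_range_succ', mul_sum]
  simp only [Nat.cast_zero, zero_mul, mul_zero, add_zero]
  refine sum_congr rfl fun j _ => ?_
  have h : ((m : R) + 1) * m.choose j = (m + 1).choose (j + 1) * (j + 1) := by
    simpa using congrArg (Nat.cast : ℕ → R) (Nat.add_one_mul_choose_eq m j)
  push_cast
  linear_combination ((-1 : R) ^ j * f (j + 1)) * h

end AlternatingChoose

noncomputable def bspline (m : ℕ) (x : ℝ) : ℝ :=
  ∑ j ∈ range (m + 1), (-1) ^ j * (m.choose j : ℝ) * max (x - j) 0 ^ (m - 1)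

theorem max_zero_pow_succ {n : ℕ} (hn : n ≠ 0) (t : ℝ) : max t 0 ^ (n + 1) = t * max t 0 ^ n := by
  rcases le_total t 0 with ht | ht
  · simp [max_eq_right ht, hn]
  · rw [max_eq_left ht, pow_succ, mul_comm]

theorem hasDerivAt_max_zero_pow {n : ℕ} (hn : 2 ≤ n) (x : ℝ) :
    HasDerivAt (fun t : ℝ => max t 0 ^ n) (n * max x 0 ^ (n - 1)) x := by
  have off_zero :
      ∀ y ≠ (0 : ℝ), HasDerivAt (fun t : ℝ => max t 0 ^ n) (n * max y 0 ^ (n - 1)) y := by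
    intro y hy
    rcases hy.lt_or_gt with hy | hy
    · have h : (fun t : ℝ => max t 0 ^ n) =ᶠ[nhds y] fun _ => 0 := by
        filter_upwards [Iio_mem_nhds hy] with t ht
        simp [max_eq_right ((mem_Iio.mp ht).le), show n ≠ 0 by omega]
      rw [max_eq_right hy.le, zero_pow (by omega), mul_zero]
      exact (hasDerivAt_const y 0).congr_of_eventuallyEq h
    · have h : (fun t : ℝ => max t 0 ^ n) =ᶠ[nhds y] fun t => t ^ n := by
        filter_upwards [Ioi_mem_nhds hy] with t ht
        rw [max_eq_left ((mem_Ioi.mp ht).le)]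
      rw [max_eq_left hy.le]
      exact (hasDerivAt_pow n y).congr_of_eventuallyEq h
  rcases eq_or_ne x 0 with rfl | hx
  · exact hasDerivAt_of_hasDerivAt_of_ne off_zero (by fun_prop) (by fun_prop)
  · exact off_zero x hx

theorem bspline_sub_bspline_sub_one (m : ℕ) (x : ℝ) :
    bspline m x - bspline m (x - 1) =
      ∑ j ∈ range (m + 2), (-1) ^ j * ((m + 1).choose j : ℝ) * max (x - j) 0 ^ (m - 1) := by
  rw [sum_range_alternating_choose_succ, bspline, bspline, ← sum_sub_distrib]
  refine sum_congr rfl fun j _ => ?_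
  push_cast
  ring_nf

theorem bspline_succ {m : ℕ} (hm : 2 ≤ m) (x : ℝ) :
    bspline (m + 1) x = x * bspline m x + (m + 1 - x) * bspline m (x - 1) := by
  have h := sum_range_alternating_choose_succ_mul_index m fun j => max (x - j) 0 ^ (m - 1)
  have hpow : ∀ j : ℕ, max (x - j) 0 ^ m = (x - j) * max (x - j) 0 ^ (m - 1) := fun j => by
    rw [← max_zero_pow_succ (by omega), Nat.sub_add_cancel (by omega)]
  have hshift : bspline m (x - 1) =
      ∑ j ∈ range (m + 1), (-1) ^ j * (m.choose j : ℝ) * max (x - ↑(j + 1)) 0 ^ (m - 1) := by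
    refine sum_congr rfl fun j _ => ?_
    push_cast
    ring_nf
  calc bspline (m + 1) x
      = x * (bspline m x - bspline m (x - 1)) -
          ∑ j ∈ range (m + 2), (-1) ^ j * ((m + 1).choose j : ℝ) *
            (j * max (x - j) 0 ^ (m - 1)) := by
        rw [bspline_sub_bspline_sub_one, mul_sum, ← sum_sub_distrib, bspline, Nat.add_sub_cancel]
        exact sum_congr rfl fun j _ => by rw [hpow]; ring
    _ = x * bspline m x + (m + 1 - x) * bspline m (x - 1) := by
        rw [h, hshift]; ring

theorem bspline_two (x : ℝ) : bspline 2 x = max x 0 - 2 * max (x - 1) 0 + max (x - 2) 0 := by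
  simp [bspline, sum_range_succ]
  ring

theorem bspline_eq_zero_of_nonpos {m : ℕ} (hm : 2 ≤ m) {x : ℝ} (hx : x ≤ 0) : bspline m x = 0 :=
  sum_eq_zero fun j _ => by
    rw [max_eq_right (by linarith [j.cast_nonneg (α := ℝ)]), zero_pow (by omega), mul_zero]

theorem bspline_eq_zero_of_le {m : ℕ} (hm : 2 ≤ m) {x : ℝ} (hx : m ≤ x) : bspline m x = 0 := by
  induction m, hm using Nat.le_induction generalizing x with
  | base =>
    norm_num at hx
    rw [bspline_two, max_eq_left (by linarith), max_eq_left (by linarith),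
      max_eq_left (by linarith)]
    ring
  | succ m hm ih =>
    push_cast at hx
    rw [bspline_succ hm, ih (by linarith), ih (by linarith)]
    ring

theorem bspline_pos {m : ℕ} (hm : 2 ≤ m) {x : ℝ} (hx₀ : 0 < x) (hxm : x < m) :
    0 < bspline m x := by
  induction m, hm using Nat.le_induction generalizing x with
  | base =>
    norm_num at hxm
    rw [bspline_two, max_eq_left hx₀.le, max_eq_right (by linarith : x - 2 ≤ 0)]
    rcases le_total x 1 with hx | hx
    · rw [max_eq_right (by linarith : x - 1 ≤ 0)]
      linarith
    · rw [max_eq_left (by linarith : 0 ≤ x - 1)]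
      linarith
  | succ m hm ih =>
    have nonneg (y : ℝ) : 0 ≤ bspline m y := by
      rcases le_or_gt y 0 with hy₀ | hy₀
      · exact (bspline_eq_zero_of_nonpos hm hy₀).ge
      rcases le_or_gt (m : ℝ) y with hym | hym
      · exact (bspline_eq_zero_of_le hm hym).ge
      · exact (ih hy₀ hym).le
    push_cast at hxm
    rw [bspline_succ hm]
    rcases lt_or_ge x m with hx | hx
    · have := ih hx₀ hx
      have := nonneg (x - 1)
      nlinarith
    · have hm' : (2 : ℝ) ≤ m := by exact_mod_cast hm
      have := ih (x := x - 1) (by linarith) (by linarith)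
      have := nonneg x
      nlinarith

theorem hasDerivAt_bspline_succ {m : ℕ} (hm : 2 ≤ m) (x : ℝ) :
    HasDerivAt (bspline (m + 1)) (m * (bspline m x - bspline m (x - 1))) x := by
  have hterm (j : ℕ) : HasDerivAt (fun y : ℝ => max (y - j) 0 ^ m)
      (m * max (x - j) 0 ^ (m - 1)) x :=
    (hasDerivAt_max_zero_pow hm (x - j)).comp_sub_const x j
  have hsum := HasDerivAt.fun_sum fun j (_ : j ∈ range (m + 2)) =>
    (hterm j).const_mul ((-1) ^ j * ((m + 1).choose j : ℝ))
  rw [bspline_sub_bspline_sub_one, mul_sum]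
  exact (hsum : HasDerivAt (bspline (m + 1)) _ x).congr_deriv (sum_congr rfl fun j _ => by ring)

theorem bspline_succ_div_pow_strictAntiOn {m : ℕ} (hm : 2 ≤ m) :
    StrictAntiOn (fun x => bspline (m + 1) x / x ^ m) (Icc 1 (m + 1)) := by
  have hb : Continuous (bspline (m + 1)) :=
    continuous_iff_continuousAt.2 fun x => (hasDerivAt_bspline_succ hm x).continuousAt
  refine strictAntiOn_of_hasDerivWithinAt_neg (convex_Icc _ _)
    (hb.continuousOn.div (by fun_prop) fun x hx => pow_ne_zero _ (by linarith [hx.1]))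
    (fun x hx => ((hasDerivAt_bspline_succ hm x).div (hasDerivAt_pow m x)
      (pow_ne_zero _ (by rw [interior_Icc] at hx; linarith [hx.1]))).hasDerivWithinAt) ?_
  rw [interior_Icc]
  rintro x ⟨hx₁, hxm⟩
  have hx₀ : 0 < x := by linarith
  have hpos := bspline_pos hm (x := x - 1) (by linarith) (by linarith)
  have hpow : x ^ m = x ^ (m - 1) * x := by rw [← pow_succ, Nat.sub_add_cancel (by omega)]
  have hnum : m * (bspline m x - bspline m (x - 1)) * x ^ m - bspline (m + 1) x * (m * x ^ (m - 1))
      = -(m * (m + 1) * x ^ (m - 1) * bspline m (x - 1)) := by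
    rw [bspline_succ hm, hpow]; ring
  rw [hnum, neg_div]
  simp only [Left.neg_neg_iff]
  positivity

theorem ck_eq_bspline_div {k : ℕ} (hk : 2 ≤ k) {α : ℝ} (hα : 0 < α) :
    ck k α = bspline k α / α ^ (k - 1) := by
  set t : ℕ → ℝ := fun j => (-1) ^ j * (k.choose j : ℝ) * max (α - j) 0 ^ (k - 1) / α ^ (k - 1)
  have ht_of_le {j : ℕ} (hj : α ≤ j) : t j = 0 := by
    simp [t, max_eq_right (sub_nonpos.2 hj), show k - 1 ≠ 0 by omega]
  have ht_of_gt {j : ℕ} (hj : k < j) : t j = 0 := by simp [t, Nat.choose_eq_zero_of_lt hj]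
  calc ck k α = ∑ j ∈ range ⌈α⌉₊, t j := by
        refine sum_congr rfl fun j hj => ?_
        have hjα : (j : ℝ) < α := Nat.lt_ceil.1 (mem_range.1 hj)
        simp only [t]
        rw [max_eq_left (sub_nonneg.2 hjα.le), mul_div_assoc, ← div_pow,
          sub_div, div_self hα.ne']
    _ = ∑ j ∈ range (max ⌈α⌉₊ (k + 1)), t j :=
        sum_subset (range_subset_range.2 (le_max_left _ _)) fun j _ hj =>
          ht_of_le (Nat.ceil_le.1 (not_lt.1 (mt mem_range.2 hj)))
    _ = ∑ j ∈ range (k + 1), t j := (sum_subset (range_subset_range.2 (le_max_right _ _))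
        fun j _ hj => ht_of_gt (not_lt.1 (mt mem_range.2 hj))).symm
    _ = bspline k α / α ^ (k - 1) := by rw [bspline, sum_div]

theorem ck_of_le_one (k : ℕ) {α : ℝ} (hα₀ : 0 < α) (hα₁ : α ≤ 1) : ck k α = 1 := by
  rw [ck, (Nat.ceil_eq_iff one_ne_zero).2 ⟨by norm_num [hα₀], by exact_mod_cast hα₁⟩]
  simp

theorem ck_strictAntiOn {k : ℕ} (hk : 2 ≤ k) : StrictAntiOn (ck k) (Icc 1 k) := by
  refine StrictAntiOn.congr ?_ fun α hα => (ck_eq_bspline_div hk (by linarith [hα.1])).symm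
  obtain rfl | hk := hk.eq_or_lt
  · rintro a ⟨ha₁, ha₂⟩ b ⟨hb₁, hb₂⟩ hab
    have h (x : ℝ) (hx₁ : 1 ≤ x) (hx₂ : x ≤ 2) : bspline 2 x / x ^ (2 - 1) = 2 / x - 1 := by
      rw [bspline_two, max_eq_left (by linarith), max_eq_left (by linarith),
        max_eq_right (by linarith)]
      field_simp
      ring
    norm_num at ha₂ hb₂
    simp only [h a ha₁ ha₂, h b hb₁ hb₂]
    linarith [div_lt_div_of_pos_left two_pos (by linarith : (0 : ℝ) < a) hab]
  · obtain ⟨m, rfl⟩ : ∃ m, k = m + 1 := ⟨k - 1, by omega⟩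
    simpa using bspline_succ_div_pow_strictAntiOn (m := m) (by omega)

theorem ck_pos {k : ℕ} (hk : 2 ≤ k) {α : ℝ} (hα₀ : 0 < α) (hαk : α < k) : 0 < ck k α := by
  rw [ck_eq_bspline_div hk hα₀]
  exact div_pos (bspline_pos hk hα₀ hαk) (by positivity)

theorem ck_le_one {k : ℕ} (hk : 2 ≤ k) {α : ℝ} (hα₀ : 0 < α) (hαk : α ≤ k) : ck k α ≤ 1 := by
  rcases le_or_gt α 1 with hα₁ | hα₁
  · exact (ck_of_le_one k hα₀ hα₁).le
  · have hk₁ : (1 : ℝ) ≤ k := by exact_mod_cast (by omega : 1 ≤ k)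
    rw [← ck_of_le_one k one_pos le_rfl]
    exact (ck_strictAntiOn hk ⟨le_rfl, hk₁⟩ ⟨hα₁.le, hαk⟩ hα₁).le

/-- For `k ≥ 2`, `c_k` is strictly decreasing on `[1, k]`, and `0 < c_k(α) ≤ 1` for
`0 < α < k`. -/
theorem ck_strictAnti_and_pos (k : ℕ) (hk : 2 ≤ k) :
    StrictAntiOn (fun α : ℝ => ck k α) (Set.Icc (1 : ℝ) (k : ℝ)) ∧
    ∀ α : ℝ, 0 < α → α < (k : ℝ) → 0 < ck k α ∧ ck k α ≤ 1 :=
  ⟨ck_strictAntiOn hk, fun _ hα₀ hαk => ⟨ck_pos hk hα₀ hαk, ck_le_one hk hα₀ hαk.le⟩⟩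
end

section
/- Let k ≥ 1 be an integer, let j_0 ≥ 0 be an integer, and let α ∈ (j_0, j_0 + 1). Then the function c_{k+1} is differentiable at α and its derivative satisfies (d/dα) c_{k+1}(α) = −(k(k+1)/α²)·(1 − 1/α)^{k−1}·c_k(α − 1). -/
open Finset

/-!
On an interval `(j₀, j₀ + 1)` the ceiling in the definition of `c_{k+1}` is constant, so
`c_{k+1}` is locally the finite sum `Σ_{j ≤ j₀} (-1)^j C(k+1,j) (1 - j/α)^k`, which can be
differentiated termwise. The `j = 0` term is constant; in the others, substituting `j = i + 1`,
the identities `(i+1) C(k+1,i+1) = (k+1) C(k,i)` and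
`1 - (i+1)/α = (1 - 1/α)(1 - i/(α-1))` turn the sum into `c_k(α - 1)`, whose ceiling is `j₀`.
-/

noncomputable def ckPartial (n k : ℕ) (x : ℝ) : ℝ :=
  ∑ j ∈ range n, (-1 : ℝ) ^ j * (k.choose j : ℝ) * (1 - (j : ℝ) / x) ^ (k - 1)

theorem ck_eq_ckPartial (k : ℕ) (x : ℝ) : ck k x = ckPartial ⌈x⌉₊ k x := rfl

theorem Nat.ceil_eq_succ_of_mem_Ioo {R : Type*} [Semiring R] [LinearOrder R]
    [IsStrictOrderedRing R] [FloorSemiring R] {n : ℕ} {x : R} (hx : x ∈ Set.Ioo (n : R) (n + 1)) :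
    ⌈x⌉₊ = n + 1 := by
  rw [Nat.ceil_eq_iff n.succ_ne_zero]
  exact ⟨by simpa using hx.1, by exact_mod_cast hx.2.le⟩

theorem ck_eventuallyEq_ckPartial (k n : ℕ) {α : ℝ} (hα : α ∈ Set.Ioo (n : ℝ) (n + 1)) :
    ck k =ᶠ[nhds α] ckPartial (n + 1) k := by
  filter_upwards [Ioo_mem_nhds hα.1 hα.2] with x hx
  rw [ck_eq_ckPartial, Nat.ceil_eq_succ_of_mem_Ioo hx]

theorem hasDerivAt_one_sub_div_pow (c : ℝ) (k : ℕ) {α : ℝ} (hα : α ≠ 0) :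
    HasDerivAt (fun x : ℝ => (1 - c / x) ^ k) (k * (1 - c / α) ^ (k - 1) * (c / α ^ 2)) α := by
  have h : HasDerivAt (fun x : ℝ => 1 - c / x) (c / α ^ 2) α := by
    simpa only [div_eq_mul_inv] using
      (((hasDerivAt_inv hα).const_mul c).const_sub 1).congr_deriv (by ring)
  exact h.pow k

theorem hasDerivAt_ckPartial_succ (n k : ℕ) {α : ℝ} (hα : α ≠ 0) :
    HasDerivAt (ckPartial n (k + 1))
      (∑ j ∈ range n, (-1 : ℝ) ^ j * ((k + 1).choose j : ℝ) *
        (k * (1 - (j : ℝ) / α) ^ (k - 1) * ((j : ℝ) / α ^ 2))) α := by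
  unfold ckPartial
  exact HasDerivAt.fun_sum fun j _ => (hasDerivAt_one_sub_div_pow j k hα).const_mul _

theorem one_sub_succ_div {α : ℝ} (hα : α ≠ 0) (hα₁ : α ≠ 1) (i : ℝ) :
    1 - (i + 1) / α = (1 - 1 / α) * (1 - i / (α - 1)) := by
  have : α - 1 ≠ 0 := sub_ne_zero.mpr hα₁
  field_simp
  ring

theorem sum_deriv_ckPartial_succ (n k : ℕ) {α : ℝ} (hα : α ≠ 0) (hα₁ : α ≠ 1) :
    ∑ j ∈ range (n + 1), (-1 : ℝ) ^ j * ((k + 1).choose j : ℝ) *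
        (k * (1 - (j : ℝ) / α) ^ (k - 1) * ((j : ℝ) / α ^ 2)) =
      -(k * (k + 1) / α ^ 2) * (1 - 1 / α) ^ (k - 1) * ckPartial n k (α - 1) := by
  rw [sum_range_succ', ckPartial, mul_sum]
  simp only [CharP.cast_eq_zero, zero_div, mul_zero, add_zero]
  refine sum_congr rfl fun i _ => ?_
  have hchoose : ((k + 1).choose (i + 1) : ℝ) * (i + 1) = (k + 1) * k.choose i := by
    exact_mod_cast (Nat.add_one_mul_choose_eq k i).symm
  push_cast
  rw [one_sub_succ_div hα hα₁, mul_pow]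
  linear_combination
    -((-1 : ℝ) ^ i * k * (1 - 1 / α) ^ (k - 1) * (1 - i / (α - 1)) ^ (k - 1) / α ^ 2) * hchoose

theorem ck_hasDerivAt_general (k : ℕ) (j0 : ℕ) (α : ℝ)
    (h1 : (j0 : ℝ) < α) (h2 : α < (j0 : ℝ) + 1) :
    HasDerivAt (fun x : ℝ => ck (k + 1) x)
      (-((k : ℝ) * ((k : ℝ) + 1) / α ^ 2) * (1 - 1 / α) ^ (k - 1) * ck k (α - 1)) α := by
  have hα : α ∈ Set.Ioo (j0 : ℝ) (j0 + 1) := ⟨h1, h2⟩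
  have hα₀ : α ≠ 0 := ((Nat.cast_nonneg j0).trans_lt h1).ne'
  have hα₁ : α ≠ 1 := by
    rintro rfl
    have hj0 : j0 = 0 := Nat.lt_one_iff.mp (by exact_mod_cast h1)
    simp [hj0] at h2
  have hceil : ⌈α - 1⌉₊ = j0 := by
    rw [Nat.ceil_sub_one, Nat.ceil_eq_succ_of_mem_Ioo hα, Nat.add_sub_cancel]
  rw [ck_eq_ckPartial k, hceil, ← sum_deriv_ckPartial_succ j0 k hα₀ hα₁]
  exact (hasDerivAt_ckPartial_succ (j0 + 1) k hα₀).congr_of_eventuallyEq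
    (ck_eventuallyEq_ckPartial (k + 1) j0 hα)

/-- For `k ≥ 1` and `α` in an open interval `(j₀, j₀+1)` between consecutive integers,
`c_{k+1}` is differentiable at `α` with derivative
`-(k(k+1)/α²) (1 - 1/α)^{k-1} c_k(α-1)`. -/
theorem ck_hasDerivAt (k : ℕ) (hk : 1 ≤ k) (j0 : ℕ) (α : ℝ)
    (h1 : (j0 : ℝ) < α) (h2 : α < (j0 : ℝ) + 1) :
    HasDerivAt (fun x : ℝ => ck (k + 1) x)
      (-((k : ℝ) * ((k : ℝ) + 1) / α ^ 2) * (1 - 1 / α) ^ (k - 1) * ck k (α - 1)) α :=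
  ck_hasDerivAt_general k j0 α h1 h2
end

section
/- For integers r ≥ 1 and k ≥ 2, let C_{r,k}(≠) denote the number of k-tuples (a_1,…,a_k) of pairwise distinct positive integers with a_1 + ⋯ + a_k = r. Then binom(r−1, k−1) − binom(k,2)·binom(r−2, k−2) ≤ C_{r,k}(≠) ≤ binom(r−1, k−1). -/
open Finset

/-- positive compositions of `n` into `k` parts -/
private def posComps (k n : ℕ) : Finset (Fin k → ℕ) :=
  (Finset.Nat.antidiagonalTuple k n).filter fun f => ∀ i, 0 < f i

private lemma mem_posComps {k n : ℕ} {f : Fin k → ℕ} :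
    f ∈ posComps k n ↔ (∀ i, 0 < f i) ∧ ∑ i, f i = n := by
  simp [posComps, Finset.Nat.mem_antidiagonalTuple, and_comm]

private lemma posComps_zero {k : ℕ} (hk : 1 ≤ k) : posComps k 0 = ∅ := by
  rw [Finset.eq_empty_iff_forall_notMem]
  intro f hf
  rw [mem_posComps] at hf
  have h0 : 0 < k := hk
  have : f ⟨0, h0⟩ ≤ ∑ i, f i := Finset.single_le_sum (fun i _ => Nat.zero_le _) (mem_univ _)
  have := hf.1 ⟨0, h0⟩
  omega

private lemma card_posComps {k n : ℕ} (hk : 1 ≤ k) (hn : 1 ≤ n) :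
    (posComps k n).card = (n - 1).choose (k - 1) := by
  rcases le_or_gt k n with h | h
  · have e1 : {f : Fin k → ℕ // f ∈ posComps k n} ≃ {g : Fin k → ℕ // ∑ i, g i = n - k} :=
      { toFun := fun f => ⟨fun i => f.1 i - 1, by
          show ∑ i, (f.1 i - 1) = n - k
          obtain ⟨hp, hs⟩ := mem_posComps.mp f.2
          have key : ∑ i, (f.1 i - 1) + ∑ _i : Fin k, 1 = ∑ i, f.1 i := by
            rw [← Finset.sum_add_distrib]
            exact Finset.sum_congr rfl fun i _ => by have := hp i; omega
          simp only [Finset.sum_const, Finset.card_univ, Fintype.card_fin, smul_eq_mul,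
            mul_one] at key
          omega⟩
        invFun := fun g => ⟨fun i => g.1 i + 1, mem_posComps.mpr ⟨fun i => by omega, by
          rw [Finset.sum_add_distrib]
          simp only [Finset.sum_const, Finset.card_univ, Fintype.card_fin, smul_eq_mul,
            mul_one, g.2]
          omega⟩⟩
        left_inv := fun f => Subtype.ext <| funext fun i => by
          have := (mem_posComps.mp f.2).1 i
          simp only []
          omega
        right_inv := fun g => Subtype.ext <| funext fun i => by simp }
    have hcard : (posComps k n).card = Fintype.card (Sym (Fin k) (n - k)) := by
      rw [← Fintype.card_coe]
      exact Fintype.card_congr (e1.trans (Sym.equivNatSumOfFintype (Fin k) (n - k)).symm)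
    rw [hcard, Sym.card_sym_eq_choose, Fintype.card_fin]
    have h1 : k + (n - k) - 1 = n - 1 := by omega
    rw [h1]
    have h2 : n - k ≤ n - 1 := by omega
    have h3 := Nat.choose_symm h2
    have h4 : n - 1 - (n - k) = k - 1 := by omega
    rw [← h3, h4]
  · have he : posComps k n = ∅ := by
      rw [Finset.eq_empty_iff_forall_notMem]
      intro f hf
      rw [mem_posComps] at hf
      have : (k : ℕ) ≤ ∑ i, f i := by
        calc (k : ℕ) = ∑ _i : Fin k, 1 := by simp
          _ ≤ ∑ i, f i := Finset.sum_le_sum fun i _ => hf.1 i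
      omega
    rw [he, Finset.card_empty, Nat.choose_eq_zero_of_lt (by omega)]
/-- `C_{r,k}(≠)`: the number of `k`-tuples of pairwise distinct positive integers summing
to `r` (compositions of `r` into `k` distinct parts). -/
noncomputable def Cdistinct (r k : ℕ) : ℕ :=
  Nat.card {f : Fin k → ℕ // (∀ i, 0 < f i) ∧ Function.Injective f ∧ ∑ i, f i = r}

private lemma Cdistinct_eq (r k : ℕ) :
    Cdistinct r k = ((posComps k r).filter fun f => Function.Injective f).card := by
  rw [Cdistinct, ← Fintype.card_coe, ← Nat.card_eq_fintype_card]
  apply Nat.card_congr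
  apply Equiv.subtypeEquivRight
  intro f
  simp only [Finset.mem_filter, mem_posComps]
  tauto

private lemma card_pairs (k : ℕ) :
    ((univ : Finset (Fin k × Fin k)).filter fun p => p.1 < p.2).card = k.choose 2 := by
  have : ((univ : Finset (Fin k × Fin k)).filter fun p => p.1 < p.2).card
      = ((univ : Finset (Fin k)).powersetCard 2).card := by
    apply Finset.card_bij (fun p _ => ({p.1, p.2} : Finset (Fin k)))
    · intro p hp
      simp only [Finset.mem_filter] at hp
      rw [Finset.mem_powersetCard]
      exact ⟨Finset.subset_univ _, Finset.card_pair (ne_of_lt hp.2)⟩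
    · intro p hp q hq h
      simp only [Finset.mem_filter, Finset.mem_univ, true_and] at hp hq
      have h1 : p.1 ∈ ({q.1, q.2} : Finset (Fin k)) := by
        rw [← h]; simp
      have h2 : p.2 ∈ ({q.1, q.2} : Finset (Fin k)) := by
        rw [← h]; simp
      have h3 : q.1 ∈ ({p.1, p.2} : Finset (Fin k)) := by
        rw [h]; simp
      simp only [Finset.mem_insert, Finset.mem_singleton] at h1 h2 h3
      have hp' : p.1.1 < p.2.1 := hp
      have hq' : q.1.1 < q.2.1 := hq
      have h1' : p.1.1 = q.1.1 ∨ p.1.1 = q.2.1 := by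
        rcases h1 with h | h
        exacts [Or.inl (congrArg Fin.val h), Or.inr (congrArg Fin.val h)]
      have h2' : p.2.1 = q.1.1 ∨ p.2.1 = q.2.1 := by
        rcases h2 with h | h
        exacts [Or.inl (congrArg Fin.val h), Or.inr (congrArg Fin.val h)]
      have hval : p.1.1 = q.1.1 ∧ p.2.1 = q.2.1 := by
        rcases h1' with h | h <;> rcases h2' with h' | h' <;> omega
      exact Prod.ext (Fin.ext hval.1) (Fin.ext hval.2)
    · intro s hs
      rw [Finset.mem_powersetCard] at hs
      obtain ⟨a, b, hab, rfl⟩ := Finset.card_eq_two.mp hs.2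
      rcases lt_or_gt_of_ne hab with h | h
      · exact ⟨(a, b), by simp [h], rfl⟩
      · exact ⟨(b, a), by simp [h], (Finset.pair_comm b a)⟩
  rw [this, Finset.card_powersetCard, Finset.card_univ, Fintype.card_fin]

/-- `C(r-1,k-1) - C(k,2) C(r-2,k-2) ≤ C_{r,k}(≠) ≤ C(r-1,k-1)`. -/
theorem distinct_compositions_bounds (r k : ℕ) (hr : 1 ≤ r) (hk : 2 ≤ k) :
    ((r - 1).choose (k - 1) : ℤ) - (k.choose 2 : ℤ) * ((r - 2).choose (k - 2) : ℤ) ≤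
        (Cdistinct r k : ℤ) ∧
      (Cdistinct r k : ℤ) ≤ ((r - 1).choose (k - 1) : ℤ) := by
  obtain ⟨m, rfl⟩ : ∃ m, k = m + 2 := ⟨k - 2, by omega⟩
  set A : Finset (Fin (m + 2) → ℕ) := posComps (m + 2) r with hA
  set D : Finset (Fin (m + 2) → ℕ) := A.filter fun f => Function.Injective f with hDdef
  set B : Finset (Fin (m + 2) → ℕ) := A.filter fun f => ¬ Function.Injective f with hBdef
  have hAcard : A.card = (r - 1).choose (m + 1) := by
    have := card_posComps (k := m + 2) (n := r) (by omega) hr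
    simpa using this
  have hCd : Cdistinct r (m + 2) = D.card := Cdistinct_eq r (m + 2)
  have hsplit : D.card + B.card = A.card :=
    Finset.card_filter_add_card_filter_not (fun f => Function.Injective f)
  -- the bad-set bound
  have hBbound : B.card ≤ (m + 2).choose 2 * (r - 2).choose m := by
    set Pairs : Finset (Fin (m + 2) × Fin (m + 2)) :=
      (univ : Finset (Fin (m + 2) × Fin (m + 2))).filter fun p => p.1 < p.2 with hPairs
    have hsub : B ⊆ Pairs.biUnion fun p => B.filter fun f => f p.1 = f p.2 := by
      intro f hf
      have hni : ¬ Function.Injective f := (Finset.mem_filter.mp hf).2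
      obtain ⟨a, b, hab, hne⟩ := Function.not_injective_iff.mp hni
      rw [Finset.mem_biUnion]
      rcases lt_or_gt_of_ne hne with h | h
      · exact ⟨(a, b), by simp [hPairs, h], Finset.mem_filter.mpr ⟨hf, hab⟩⟩
      · exact ⟨(b, a), by simp [hPairs, h], Finset.mem_filter.mpr ⟨hf, hab.symm⟩⟩
    have hfiber : ∀ p ∈ Pairs, (B.filter fun f => f p.1 = f p.2).card ≤ (r - 2).choose m := by
      intro p hp
      have hplt : p.1 < p.2 := by simpa [hPairs] using hp
      have hpne : p.1 ≠ p.2 := ne_of_lt hplt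
      obtain ⟨l0, hl0⟩ := Fin.exists_succAbove_eq hpne
      set Φ : (Fin (m + 2) → ℕ) → (Fin (m + 1) → ℕ) :=
        fun f l => if l = l0 then 2 * f p.1 - 1 else f (p.2.succAbove l) with hΦ
      have hmem : ∀ f ∈ B.filter fun f => f p.1 = f p.2, Φ f ∈ posComps (m + 1) (r - 1) := by
        intro f hf
        rw [Finset.mem_filter] at hf
        obtain ⟨hfB, hfeq⟩ := hf
        obtain ⟨hpos, hsum⟩ := mem_posComps.mp (Finset.mem_filter.mp hfB).1
        rw [mem_posComps]
        constructor
        · intro l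
          by_cases h : l = l0 <;> simp only [hΦ, h, if_true, if_false, if_pos, if_neg, h]
          · have := hpos p.1; omega
          · exact hpos _
        · have hS : ∑ t, f t = f p.2 + ∑ l, f (p.2.succAbove l) :=
            Fin.sum_univ_succAbove f p.2
          have h1 : ∑ l, Φ f l = Φ f l0 + ∑ l ∈ univ.erase l0, Φ f l :=
            (Finset.add_sum_erase univ _ (Finset.mem_univ l0)).symm
          have h2 : ∑ l, f (p.2.succAbove l)
              = f (p.2.succAbove l0) + ∑ l ∈ univ.erase l0, f (p.2.succAbove l) :=
            (Finset.add_sum_erase univ _ (Finset.mem_univ l0)).symm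
          have h3 : ∑ l ∈ univ.erase l0, Φ f l = ∑ l ∈ univ.erase l0, f (p.2.succAbove l) := by
            apply Finset.sum_congr rfl
            intro l hl
            have : l ≠ l0 := (Finset.mem_erase.mp hl).1
            simp [hΦ, this]
          have h4 : Φ f l0 = 2 * f p.1 - 1 := by simp [hΦ]
          have h5 : f (p.2.succAbove l0) = f p.1 := by rw [hl0]
          have := hpos p.1
          rw [hsum] at hS
          omega
      have hinj : Set.InjOn Φ (B.filter fun f => f p.1 = f p.2) := by
        intro f hf g hg h
        simp only [Finset.coe_filter, Set.mem_setOf_eq] at hf hg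
        obtain ⟨hfB, hfeq⟩ := hf
        obtain ⟨hgB, hgeq⟩ := hg
        have hfpos := (mem_posComps.mp (Finset.mem_filter.mp hfB).1).1
        have hgpos := (mem_posComps.mp (Finset.mem_filter.mp hgB).1).1
        have h0 : f p.1 = g p.1 := by
          have := congrFun h l0
          simp only [hΦ, if_pos rfl] at this
          have hfp := hfpos p.1
          have hgp := hgpos p.1
          omega
        funext t
        rcases eq_or_ne t p.2 with rfl | ht2
        · rw [← hfeq, ← hgeq]; exact h0
        · obtain ⟨l, hl⟩ := Fin.exists_succAbove_eq ht2
          rcases eq_or_ne l l0 with rfl | hll0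
          · rw [← hl, hl0]; exact h0
          · have := congrFun h l
            simpa [hΦ, hll0, hl] using this
      calc (B.filter fun f => f p.1 = f p.2).card
          ≤ (posComps (m + 1) (r - 1)).card := Finset.card_le_card_of_injOn Φ hmem hinj
        _ ≤ (r - 2).choose m := by
            rcases Nat.lt_or_ge r 2 with h | h
            · have hr1 : r = 1 := by omega
              rw [hr1]
              simp [posComps_zero (show 1 ≤ m + 1 by omega)]
            · have := card_posComps (k := m + 1) (n := r - 1) (by omega) (by omega)
              have e1 : r - 1 - 1 = r - 2 := by omega
              simp only [Nat.add_sub_cancel, e1] at this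
              rw [this]
    calc B.card ≤ (Pairs.biUnion fun p => B.filter fun f => f p.1 = f p.2).card :=
          Finset.card_le_card hsub
      _ ≤ ∑ p ∈ Pairs, (B.filter fun f => f p.1 = f p.2).card := Finset.card_biUnion_le
      _ ≤ ∑ _p ∈ Pairs, (r - 2).choose m := Finset.sum_le_sum hfiber
      _ = Pairs.card * (r - 2).choose m := by rw [Finset.sum_const, smul_eq_mul]
      _ = (m + 2).choose 2 * (r - 2).choose m := by rw [card_pairs]
  have hDP : D.card ≤ A.card := Finset.card_le_card (Finset.filter_subset _ _)
  have e1 : m + 2 - 1 = m + 1 := by omega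
  have e2 : m + 2 - 2 = m := by omega
  rw [e1, e2, hCd]
  constructor
  · omega
  · omega
end

section
/- For each fixed integer k ≥ 0, the ratio I(n,k)/I(n) tends to 0 as n → ∞, where I(n) is the number of involutions of {1,…,n} and I(n,k) is the number of involutions of {1,…,n} with exactly k fixed points. -/
/-!
Deleting the 2-cycle through a non-fixed point `a` of an involution `σ` (i.e. passing to
`swap a (σ a) * σ`) produces an involution with two more fixed points, and `σ` is recovered from
the result together with the ordered pair `(a, σ a)`. Counting these pairs gives
`I(n,k) (n - k) ≤ I(n,k+2) (k+2)(k+1) ≤ I(n) (k+2)(k+1)`, so `I(n,k) / I(n) = O(1/n)`.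
-/

open Finset Filter

/-- The number of involutions of `{1,…,n}`. -/
noncomputable def invol (n : ℕ) : ℕ :=
  Nat.card {σ : Equiv.Perm (Fin n) // σ * σ = 1}

/-- The number of involutions of `{1,…,n}` with exactly `k` fixed points. -/
noncomputable def involFix (n k : ℕ) : ℕ :=
  Nat.card {σ : Equiv.Perm (Fin n) //
    σ * σ = 1 ∧ (Finset.univ.filter (fun i : Fin n => σ i = i)).card = k}

namespace Equiv.Perm

variable {α : Type*}

theorem apply_apply_of_mul_self_eq_one {σ : Perm α} (hσ : σ * σ = 1) (x : α) :
    σ (σ x) = x := by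
  simpa using DFunLike.congr_fun hσ x

variable [DecidableEq α]

theorem swap_mul_mul_self_eq_one {σ : Perm α} (hσ : σ * σ = 1) (a : α) :
    swap a (σ a) * σ * (swap a (σ a) * σ) = 1 := by
  calc swap a (σ a) * σ * (swap a (σ a) * σ)
      = swap a (σ a) * (σ * swap a (σ a)) * σ := by simp only [mul_assoc]
    _ = swap a (σ a) * swap (σ a) a * (σ * σ) := by
        rw [mul_swap_eq_swap_mul, apply_apply_of_mul_self_eq_one hσ]; simp only [mul_assoc]
    _ = 1 := by rw [hσ, swap_comm, swap_mul_self, mul_one]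

variable [Fintype α]

theorem filter_swap_mul_apply_eq {σ : Perm α} (hσ : σ * σ = 1) (a : α) :
    univ.filter (fun x => (swap a (σ a) * σ) x = x) =
      insert a (insert (σ a) (univ.filter fun x => σ x = x)) := by
  ext x
  simp only [mem_filter, mem_univ, true_and, mem_insert, mul_apply, swap_apply_eq_iff]
  by_cases hxa : x = a
  · subst hxa; simp
  by_cases hxb : x = σ a
  · subst hxb; simp [apply_apply_of_mul_self_eq_one hσ]
  · simp [swap_apply_of_ne_of_ne hxa hxb, hxa, hxb]

theorem card_filter_swap_mul_apply_eq {σ : Perm α} (hσ : σ * σ = 1) {a : α}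
    (ha : σ a ≠ a) :
    #(univ.filter fun x => (swap a (σ a) * σ) x = x) = #(univ.filter fun x => σ x = x) + 2 := by
  have hσa : σ (σ a) ≠ σ a := fun h => ha (σ.injective h)
  rw [filter_swap_mul_apply_eq hσ, card_insert_of_notMem, card_insert_of_notMem] <;>
    simp [ha, hσa, Ne.symm ha]

end Equiv.Perm

open Equiv Perm

variable (α : Type*) [Fintype α] [DecidableEq α]

def involutionsWithFixed (k : ℕ) : Finset (Perm α) :=
  univ.filter fun σ => σ * σ = 1 ∧ #(univ.filter fun x => σ x = x) = k

variable {α}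

@[simp]
theorem mem_involutionsWithFixed {k : ℕ} {σ : Perm α} :
    σ ∈ involutionsWithFixed α k ↔ σ * σ = 1 ∧ #(univ.filter fun x => σ x = x) = k := by
  simp [involutionsWithFixed]

theorem card_involutionsWithFixed_mul_le (k : ℕ) :
    #(involutionsWithFixed α k) * (Fintype.card α - k) ≤
      #(involutionsWithFixed α (k + 2)) * ((k + 2) * (k + 1)) := by
  have hsrc : #((involutionsWithFixed α k).sigma fun σ => σ.support) =
      #(involutionsWithFixed α k) * (Fintype.card α - k) := by
    rw [card_sigma, sum_const_nat]
    intro σ hσ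
    rw [← (mem_involutionsWithFixed.1 hσ).2, ← card_univ,
      ← card_filter_add_card_filter_not (s := univ) (fun x => σ x ≠ x)]
    simp [support]
  have htgt : #((involutionsWithFixed α (k + 2)).sigma
      fun τ => (univ.filter fun x => τ x = x).offDiag) =
      #(involutionsWithFixed α (k + 2)) * ((k + 2) * (k + 1)) := by
    rw [card_sigma, sum_const_nat]
    intro τ hτ
    rw [offDiag_card, (mem_involutionsWithFixed.1 hτ).2, ← Nat.mul_sub_one]
    rfl
  rw [← hsrc, ← htgt]
  refine card_le_card_of_injOn (fun p => ⟨swap p.2 (p.1 p.2) * p.1, (p.2, p.1 p.2)⟩) ?_ ?_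
  · rintro ⟨σ, a⟩ h
    simp only [coe_sigma, Set.mem_sigma_iff, mem_coe, mem_involutionsWithFixed, mem_support] at h
    obtain ⟨⟨hσ, hk⟩, ha⟩ := h
    simp only [coe_sigma, Set.mem_sigma_iff, mem_coe, mem_involutionsWithFixed, mem_offDiag,
      swap_mul_mul_self_eq_one hσ, card_filter_swap_mul_apply_eq hσ ha, hk]
    rw [filter_swap_mul_apply_eq hσ]
    simp [Ne.symm ha]
  · rintro ⟨σ, a⟩ - ⟨σ', a'⟩ - h
    obtain ⟨rfl, hσa⟩ := Prod.mk.inj (congrArg Sigma.snd h)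
    have hτ := congrArg Sigma.fst h
    simp only [hσa] at hτ
    rw [mul_left_cancel hτ]

theorem involFix_eq_card (n k : ℕ) : involFix n k = #(involutionsWithFixed (Fin n) k) := by
  rw [involFix, Nat.card_eq_fintype_card, Fintype.card_subtype, involutionsWithFixed]

theorem invol_pos (n : ℕ) : 0 < invol n :=
  have : Nonempty {σ : Perm (Fin n) // σ * σ = 1} := ⟨⟨1, mul_one 1⟩⟩
  Nat.card_pos

theorem involFix_le_invol (n k : ℕ) : involFix n k ≤ invol n :=
  Nat.card_le_card_of_injective _ (Subtype.impEmbedding _ _ fun _ h => h.1).injective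

theorem involFix_div_invol_le {n k : ℕ} (hkn : k < n) :
    (involFix n k : ℝ) / invol n ≤ (k + 2) * (k + 1) / (n - k) := by
  have hcount : (involFix n k : ℝ) * (n - k) ≤ involFix n (k + 2) * ((k + 2) * (k + 1)) := by
    have h := card_involutionsWithFixed_mul_le (α := Fin n) k
    rw [← involFix_eq_card, ← involFix_eq_card, Fintype.card_fin] at h
    rw [← Nat.cast_sub hkn.le]
    exact_mod_cast h
  have hle : (involFix n (k + 2) : ℝ) ≤ invol n := by exact_mod_cast involFix_le_invol n (k + 2)
  rw [div_le_div_iff₀ (by exact_mod_cast invol_pos n) (by simpa using hkn)]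
  calc (involFix n k : ℝ) * (n - k) ≤ involFix n (k + 2) * ((k + 2) * (k + 1)) := hcount
    _ ≤ invol n * ((k + 2) * (k + 1)) := by gcongr
    _ = (k + 2) * (k + 1) * invol n := mul_comm _ _

/-- For each fixed `k`, the proportion of involutions of `{1,…,n}` with exactly `k` fixed
points tends to `0` (the `λ = ∞` situation). -/
theorem involutions_fixed_points_ratio (k : ℕ) :
    Tendsto (fun n : ℕ => (involFix n k : ℝ) / (invol n : ℝ)) atTop (nhds 0) := by
  have hbound : Tendsto (fun n : ℕ => ((k + 2) * (k + 1) : ℝ) / (n - k)) atTop (nhds 0) :=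
    tendsto_const_nhds.div_atTop (tendsto_atTop_add_const_right _ _ tendsto_natCast_atTop_atTop)
  refine squeeze_zero' (.of_forall fun n => by positivity) ?_ hbound
  filter_upwards [eventually_gt_atTop k] with n hn using involFix_div_invol_le hn
end

section
/- For each fixed integer k ≥ 0, the ratio S(n,k)/B_n tends to 0 as n → ∞, where B_n is the number of partitions of the set {1,…,n} and S(n,k) is the number of partitions of {1,…,n} having exactly k blocks of size 1. -/
open Finset Filter

/-- The Bell number: the number of partitions of the set `{1,…,n}`. -/
noncomputable def bell (n : ℕ) : ℕ :=
  Nat.card (Finpartition (Finset.univ : Finset (Fin n)))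

/-- The number of partitions of `{1,…,n}` with exactly `k` blocks of size 1
(singleton blocks). -/
noncomputable def partSingletons (n k : ℕ) : ℕ :=
  Nat.card {P : Finpartition (Finset.univ : Finset (Fin n)) //
    (P.parts.filter (fun b => b.card = 1)).card = k}

/-!
Let `S j` be the number of partitions of an `n`-set with exactly `j` singleton blocks. For fixed
`m` and large `n` we show `S j ≤ S (j + 1)` for all `j ≤ m`; then `(K + 1) S k ≤ S k + ⋯ + S (k + K)
≤ B_n` for every `K`, so `S k / B_n → 0`.

To compare `S j` with `S (j + 1)`, let `u = n / K` with `K = 16 (m + 2)` and split the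
partitions counted by `S j` at `4u` blocks. A partition with at most `4u` blocks has at least
`n - 8u` elements in blocks of size at least `3`; detaching any of them as a new singleton gives a
partition counted by `S (j + 1)`, and each such partition arises at most `(j + 1)(4u + 1)` times.
So these partitions number at most `S (j + 1) / 2`. A partition is determined by the map sending
each element to the least element of its block, whose fixed points are one per block; hence at most
`2ⁿ nⁿ⁻⁴ᵘ⁻¹` partitions have more than `4u` blocks. On the other hand, labelling `j + 1` points as
singletons and attaching each of `n - j - 1 - 2u` further points to one of `u` fixed pairs exhibits
`u ^ (n - j - 1 - 2u)` partitions counted by `S (j + 1)`, which for large `n` is more than twice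
that bound.
-/

theorem two_mul_two_pow_mul_pow_le {n j K u : ℕ} (hK : 5 ≤ K) (hu : (4 * K) ^ (2 * K) ≤ u)
    (hju : j ≤ u) (hlow : K * u ≤ n) (hhigh : n < K * (u + 1)) :
    2 * (2 ^ n * n ^ (n - (4 * u + 1))) ≤ u ^ (n - (j + 1) - 2 * u) := by
  have hu1 : 1 ≤ u := le_trans (Nat.one_le_pow _ _ (by omega)) hu
  have hKu : K ≤ K * u := Nat.le_mul_of_pos_right K hu1
  have h5u : 5 * u ≤ K * u := Nat.mul_le_mul_right u hK
  have hn : n + 1 ≤ 2 * K * u := by rw [mul_add, mul_one] at hhigh; rw [mul_assoc]; omega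
  set E := n - (4 * u + 1)
  have hexp : n - (j + 1) - 2 * u = (2 * u - j) + E := by omega
  calc 2 * (2 ^ n * n ^ E) = 2 ^ (n + 1) * n ^ E := by ring
    _ ≤ 2 ^ (n + 1) * (2 * K * u) ^ E := by
        gcongr
        omega
    _ ≤ 2 ^ (n + 1) * ((2 * K) ^ (n + 1) * u ^ E) := by
        rw [mul_pow]
        gcongr
        · omega
        · omega
    _ = (4 * K) ^ (n + 1) * u ^ E := by rw [← mul_assoc, ← mul_pow]; ring
    _ ≤ (4 * K) ^ (2 * K * u) * u ^ E := by
        gcongr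
        omega
    _ = ((4 * K) ^ (2 * K)) ^ u * u ^ E := by rw [pow_mul]
    _ ≤ u ^ u * u ^ E := by gcongr
    _ ≤ u ^ (2 * u - j) * u ^ E := by
        gcongr
        omega
    _ = u ^ (n - (j + 1) - 2 * u) := by rw [hexp, pow_add]

namespace Finpartition

section DecidableEq

variable {α : Type*} [Fintype α] [DecidableEq α]

section Basic

variable (P Q : Finpartition (univ : Finset α))

theorem eq_of_part_eq (h : ∀ x, P.part x = Q.part x) : P = Q := by
  refine Finpartition.ext (Finset.ext fun p ↦ ⟨fun hp ↦ ?_, fun hp ↦ ?_⟩)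
  · obtain ⟨x, -, rfl⟩ := P.part_surjOn hp
    simp [h]
  · obtain ⟨x, -, rfl⟩ := Q.part_surjOn hp
    simp [← h]

def singletonParts : Finset (Finset α) := {p ∈ P.parts | #p = 1}

theorem card_singletonParts : #P.singletonParts = #{x | {x} ∈ P.parts} := by
  suffices P.singletonParts =
      ({x | {x} ∈ P.parts} : Finset α).map ⟨singleton, singleton_injective⟩ by
    rw [this, card_map]
  ext p
  simp only [singletonParts, mem_filter, card_eq_one, Finset.mem_map, mem_univ, true_and,
    Function.Embedding.coeFn_mk]
  constructor
  · rintro ⟨hp, x, rfl⟩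
    exact ⟨x, hp, rfl⟩
  · rintro ⟨x, hx, rfl⟩
    exact ⟨hx, x, rfl⟩

theorem card_le_two_mul_card_parts_add :
    Fintype.card α ≤ 2 * #P.parts + #{x | 3 ≤ #(P.part x)} := by
  have hsmall : #{x | #(P.part x) < 3} ≤ 2 * #P.parts := by
    refine (card_le_mul_card_image (f := P.part) _ 2 fun p hp ↦ ?_).trans
      (Nat.mul_le_mul_left 2 (card_le_card fun p hp ↦ ?_))
    · obtain ⟨x, hx, rfl⟩ := mem_image.1 hp
      refine (card_le_card fun y hy ↦ ?_).trans (Nat.lt_succ_iff.1 (mem_filter.1 hx).2)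
      rw [← (mem_filter.1 hy).2]
      exact P.mem_part (mem_univ y)
    · obtain ⟨x, -, rfl⟩ := mem_image.1 hp
      exact P.part_mem.2 (mem_univ x)
  have := card_filter_add_card_filter_not (s := univ) (fun x ↦ #(P.part x) < 3)
  simp only [not_lt, card_univ] at this
  omega

end Basic

variable (α) in
def partitionsWithSingletons (j : ℕ) : Finset (Finpartition (univ : Finset α)) :=
  {P | #P.singletonParts = j}

def ker {β : Type*} [DecidableEq β] (g : α → β) : Finpartition (univ : Finset α) :=
  letI : DecidableRel (Setoid.ker g) := fun x y ↦ decEq (g x) (g y)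
  ofSetoid (Setoid.ker g)

theorem mem_part_ker {β : Type*} [DecidableEq β] {g : α → β} {x y : α} :
    y ∈ (ker g).part x ↔ g x = g y :=
  mem_part_ofSetoid_iff_rel

theorem singleton_mem_parts_ker_iff {β : Type*} [DecidableEq β] {g : α → β} {x : α} :
    {x} ∈ (ker g).parts ↔ ∀ y, g x = g y → y = x := by
  constructor
  · intro hx y hy
    rw [← mem_part_ker, part_eq_of_mem _ hx (mem_singleton_self x)] at hy
    exact mem_singleton.1 hy
  · intro hx
    have : (ker g).part x = {x} := by
      ext y
      rw [mem_part_ker, mem_singleton]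
      exact ⟨hx y, fun h ↦ h ▸ rfl⟩
    exact this ▸ (part_mem _).2 (mem_univ x)

/-- The fibres of `blockLabel f` are `m` singletons and, for each `j : Fin a`, the pair
`(j, 0), (j, 1)` together with `f⁻¹ j`; so `f` can be read off the partition into fibres. -/
def blockLabel {m a c : ℕ} (f : Fin c → Fin a) :
    Fin m ⊕ (Fin a × Fin 2 ⊕ Fin c) → Fin m ⊕ Fin a
  | .inl i => .inl i
  | .inr (.inl (j, _)) => .inr j
  | .inr (.inr t) => .inr (f t)

theorem blockLabel_fiber_subsingleton_iff {m a c : ℕ} (f : Fin c → Fin a) (z) :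
    (∀ w, blockLabel (m := m) f z = blockLabel f w → w = z) ↔ z.isLeft := by
  rcases z with i | (⟨j, k⟩ | t)
  · simp only [Sum.isLeft_inl, iff_true]
    rintro (i' | (⟨j', k'⟩ | t')) h <;> simp_all [blockLabel]
  · simp only [Sum.isLeft_inr, Bool.false_eq_true, iff_false, not_forall]
    refine ⟨.inr (.inl (j, k.rev)), rfl, ?_⟩
    fin_cases k <;> simp
  · simp only [Sum.isLeft_inr, Bool.false_eq_true, iff_false, not_forall]
    exact ⟨.inr (.inl (f t, 0)), rfl, by simp⟩

theorem pow_le_card_partitionsWithSingletons {m a c : ℕ} (h : Fintype.card α = m + (2 * a + c)) :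
    a ^ c ≤ #(partitionsWithSingletons α m) := by
  let e : α ≃ Fin m ⊕ (Fin a × Fin 2 ⊕ Fin c) := Fintype.equivOfCardEq (by simp [h]; ring)
  calc a ^ c = #(univ : Finset (Fin c → Fin a)) := by simp
    _ ≤ _ := card_le_card_of_injOn (fun f ↦ ker (blockLabel f ∘ e)) ?_ ?_
  · intro f _
    have hsingle : ({x | {x} ∈ (ker (blockLabel f ∘ e)).parts} : Finset α) =
        univ.map (Function.Embedding.inl.trans e.symm.toEmbedding) := by
      ext x
      simp only [mem_filter, mem_univ, true_and, Finset.mem_map,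
        singleton_mem_parts_ker_iff, Function.comp_apply]
      have := blockLabel_fiber_subsingleton_iff (m := m) f (e x)
      rw [← e.forall_congr_right] at this
      simp only [e.apply_eq_iff_eq, Sum.isLeft_iff] at this
      exact this.trans (exists_congr fun i ↦ by
        change _ ↔ e.symm (.inl i) = x
        rw [e.symm_apply_eq, eq_comm])
    simp [partitionsWithSingletons, card_singletonParts, hsingle]
  · intro f _ f' _ hff'
    funext t
    have hmem : e.symm (.inr (.inl (f t, 0))) ∈
        (ker (blockLabel f ∘ e)).part (e.symm (.inr (.inr t))) := by
      simp [mem_part_ker, blockLabel]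
    rw [show ker (blockLabel f ∘ e) = ker (blockLabel f' ∘ e) from hff', mem_part_ker] at hmem
    simpa [blockLabel] using hmem.symm

section SplitOff

variable (P Q : Finpartition (univ : Finset α))

def splitOff (x : α) : Finpartition (univ : Finset α) :=
  (P.avoid {x}).extend (singleton_ne_empty x) disjoint_sdiff_self_left (by simp)

variable {P Q} {x : α}

theorem singleton_mem_parts_splitOff : {x} ∈ (P.splitOff x).parts := mem_insert_self _ _

theorem card_parts_splitOff_le : #(P.splitOff x).parts ≤ #P.parts + 1 := by
  rw [splitOff, card_extend]
  exact Nat.succ_le_succ (card_erase_le.trans card_image_le)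

theorem mem_parts_splitOff_of_notMem {p : Finset α} (hp : p ∈ P.parts) (hx : x ∉ p) :
    p ∈ (P.splitOff x).parts := by
  refine mem_insert_of_mem (P.mem_avoid.2 ⟨p, hp, fun hpx ↦ ?_, ?_⟩)
  · obtain ⟨y, hy⟩ := P.nonempty_of_mem_parts hp
    exact hx (mem_singleton.1 (hpx hy) ▸ hy)
  · rw [sdiff_singleton_eq_erase, erase_eq_of_notMem hx]

theorem erase_mem_parts_splitOff (h : 2 ≤ #(P.part x)) :
    (P.part x).erase x ∈ (P.splitOff x).parts := by
  refine mem_insert_of_mem (P.mem_avoid.2 ⟨P.part x, P.part_mem.2 (mem_univ x), fun hx ↦ ?_,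
    sdiff_singleton_eq_erase _ _⟩)
  have := card_le_card (show P.part x ⊆ {x} from hx)
  rw [card_singleton] at this
  omega

theorem part_splitOff_of_notMem {z : α} (hz : z ∉ P.part x) :
    (P.splitOff x).part z = P.part z := by
  have hxz : x ∉ P.part z := fun hx ↦
    hz (P.part_eq_of_mem (P.part_mem.2 (mem_univ z)) hx ▸ P.mem_part (mem_univ z))
  exact part_eq_of_mem _ (mem_parts_splitOff_of_notMem (P.part_mem.2 (mem_univ z)) hxz)
    (P.mem_part (mem_univ z))

theorem eq_of_splitOff_eq (h : P.splitOff x = Q.splitOff x)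
    (he : (P.part x).erase x = (Q.part x).erase x) : P = Q := by
  have hx : P.part x = Q.part x := by
    rw [← insert_erase (P.mem_part (mem_univ x)), he, insert_erase (Q.mem_part (mem_univ x))]
  refine eq_of_part_eq P Q fun z ↦ ?_
  by_cases hz : z ∈ P.part x
  · rw [P.part_eq_of_mem (P.part_mem.2 (mem_univ x)) hz,
      Q.part_eq_of_mem (Q.part_mem.2 (mem_univ x)) (hx ▸ hz), hx]
  · rw [← part_splitOff_of_notMem (P := P) hz, ← part_splitOff_of_notMem (P := Q) (hx ▸ hz),
      h]

theorem singletonParts_splitOff (h : 3 ≤ #(P.part x)) :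
    (P.splitOff x).singletonParts = insert {x} P.singletonParts := by
  have hpart : ∀ p ∈ P.parts, x ∈ p → 3 ≤ #p := fun _ hp hx ↦
    P.part_eq_of_mem hp hx ▸ h
  ext p
  simp only [singletonParts, mem_insert, mem_filter]
  constructor
  · rintro ⟨hp, hp1⟩
    rcases mem_insert.1 hp with rfl | hp
    · exact .inl rfl
    obtain ⟨d, hd, -, rfl⟩ := P.mem_avoid.1 hp
    rw [sdiff_singleton_eq_erase] at hp1 ⊢
    by_cases hxd : x ∈ d
    · have := hpart d hd hxd
      rw [card_erase_of_mem hxd] at hp1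
      omega
    · rw [erase_eq_of_notMem hxd] at hp1 ⊢
      exact .inr ⟨hd, hp1⟩
  · rintro (rfl | ⟨hp, hp1⟩)
    · exact ⟨singleton_mem_parts_splitOff, card_singleton x⟩
    refine ⟨mem_parts_splitOff_of_notMem hp fun hx ↦ ?_, hp1⟩
    have := hpart p hp hx
    omega

theorem card_singletonParts_splitOff (h : 3 ≤ #(P.part x)) :
    #(P.splitOff x).singletonParts = #P.singletonParts + 1 := by
  rw [singletonParts_splitOff h, card_insert_of_notMem]
  intro hx
  have := P.part_eq_of_mem (mem_filter.1 hx).1 (mem_singleton_self x)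
  rw [this, card_singleton] at h
  omega

end SplitOff

theorem card_filter_card_parts_le_mul_le (j b : ℕ) :
    #{P ∈ partitionsWithSingletons α j | #P.parts ≤ b} * (Fintype.card α - 2 * b) ≤
      (j + 1) * #(partitionsWithSingletons α (j + 1)) * (b + 1) := by
  classical
  -- Double count the pairs `(P, ⟨Q, y⟩)` with `Q = P.splitOff y`: `P` is recovered from `Q` and
  -- its block `(P.part y).erase y`.
  set T := {Q ∈ partitionsWithSingletons α (j + 1) | #Q.parts ≤ b + 1}
  set E := T.sigma fun Q ↦ ({y | {y} ∈ Q.parts} : Finset α)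
  have hE : #E ≤ (j + 1) * #(partitionsWithSingletons α (j + 1)) := by
    calc #E = ∑ _Q ∈ T, (j + 1) := by
          rw [card_sigma]
          refine sum_congr rfl fun Q hQ ↦ ?_
          rw [← card_singletonParts]
          simpa [partitionsWithSingletons] using (mem_filter.1 hQ).1
      _ = (j + 1) * #T := by rw [sum_const, smul_eq_mul, mul_comm]
      _ ≤ _ := Nat.mul_le_mul_left _ (card_filter_le _ _)
  refine (card_mul_le_card_mul (t := E)
    (fun P (q : Σ _ : Finpartition (univ : Finset α), α) ↦
      3 ≤ #(P.part q.2) ∧ P.splitOff q.2 = q.1) (fun P hP ↦ ?_) fun q hq ↦ ?_).trans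
    (Nat.mul_le_mul_right _ hE)
  · obtain ⟨hPj, hPb⟩ : #P.singletonParts = j ∧ #P.parts ≤ b := by
      simpa [partitionsWithSingletons] using hP
    have := P.card_le_two_mul_card_parts_add
    calc Fintype.card α - 2 * b ≤ #{x | 3 ≤ #(P.part x)} := by omega
      _ ≤ _ := card_le_card_of_injOn (fun x ↦ ⟨P.splitOff x, x⟩) (fun x hx ↦ ?_)
          fun x _ y _ hxy ↦ congrArg Sigma.snd hxy
    have hx3 : 3 ≤ #(P.part x) := (mem_filter.1 hx).2
    simp [E, T, partitionsWithSingletons, hx3, card_singletonParts_splitOff, hPj,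
      singleton_mem_parts_splitOff, card_parts_splitOff_le.trans (Nat.succ_le_succ hPb)]
  · obtain ⟨Q, y⟩ := q
    have hQb : #Q.parts ≤ b + 1 := (mem_filter.1 (mem_sigma.1 hq).1).2
    refine (card_le_card_of_injOn (fun P ↦ (P.part y).erase y) (fun P hP ↦ ?_)
      fun P hP P' hP' h ↦ ?_).trans hQb
    · obtain ⟨-, h3, hPQ⟩ := (mem_bipartiteBelow _).1 hP
      rw [mem_coe, ← show P.splitOff y = Q from hPQ]
      exact erase_mem_parts_splitOff (Nat.le_of_succ_le h3)
    · obtain ⟨-, -, hPQ⟩ := (mem_bipartiteBelow _).1 hP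
      obtain ⟨-, -, hPQ'⟩ := (mem_bipartiteBelow _).1 hP'
      exact eq_of_splitOff_eq (hPQ.trans hPQ'.symm) h

end DecidableEq

section LinearOrder

variable {α : Type*} [Fintype α] [LinearOrder α] (P : Finpartition (univ : Finset α))

def minOfPart (x : α) : α := (P.part x).min' (P.part_nonempty.2 (mem_univ x))

theorem minOfPart_eq_min' {p : Finset α} (hp : p ∈ P.parts) {x : α} (hx : x ∈ p) :
    P.minOfPart x = p.min' ⟨x, hx⟩ := by
  unfold minOfPart
  congr 1
  exact P.part_eq_of_mem hp hx

theorem mem_part_iff_minOfPart_eq {x y : α} :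
    y ∈ P.part x ↔ P.minOfPart y = P.minOfPart x := by
  have hx := P.part_mem.2 (mem_univ x)
  constructor
  · intro hy
    rw [P.minOfPart_eq_min' hx hy, P.minOfPart_eq_min' hx (P.mem_part (mem_univ x))]
  · intro h
    have hmy := min'_mem (P.part y) (P.part_nonempty.2 (mem_univ y))
    have hmx := min'_mem (P.part x) (P.part_nonempty.2 (mem_univ x))
    rw [← minOfPart, h] at hmy
    rw [← P.eq_of_mem_parts (P.part_mem.2 (mem_univ y)) hx hmy hmx]
    exact P.mem_part (mem_univ y)

theorem minOfPart_injective : Function.Injective (minOfPart (α := α)) := fun P Q h ↦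
  eq_of_part_eq P Q fun x ↦ by
    ext y
    rw [mem_part_iff_minOfPart_eq, mem_part_iff_minOfPart_eq, h]

theorem card_parts_le_card_filter_minOfPart_eq : #P.parts ≤ #{x | P.minOfPart x = x} := by
  refine card_le_card_of_surjOn P.part fun p hp ↦ ?_
  have hne := P.nonempty_of_mem_parts hp
  refine ⟨p.min' hne, ?_, P.part_eq_of_mem hp (min'_mem p hne)⟩
  simpa using P.minOfPart_eq_min' hp (min'_mem p hne)

theorem card_filter_le_card_parts_le (B : ℕ) :
    #{P : Finpartition (univ : Finset α) | B ≤ #P.parts} ≤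
      2 ^ Fintype.card α * Fintype.card α ^ (Fintype.card α - B) := by
  classical
  set n := Fintype.card α
  set F : Finset (Finset α) := {M | B ≤ #M}
  let box : Finset α → Finset (α → α) := fun M ↦
    Fintype.piFinset fun x ↦ if x ∈ M then {x} else univ
  have hbox : ∀ M ∈ F, #(box M) ≤ n ^ (n - B) := by
    intro M hM
    have hcompl : #{x | x ∉ M} ≤ n - B := by
      have := card_compl M
      rw [compl_eq_univ_sdiff, ← filter_notMem_eq_sdiff] at this
      have := (mem_filter.1 hM).2
      omega
    simp only [box, Fintype.card_piFinset, apply_ite card, card_singleton, card_univ, prod_ite,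
      prod_const_one, prod_const, one_mul]
    rcases Nat.eq_zero_or_pos n with hn | hn
    · rw [show #{x | x ∉ M} = 0 by omega, hn]
      simp
    · exact Nat.pow_le_pow_right hn hcompl
  calc #{P : Finpartition (univ : Finset α) | B ≤ #P.parts} ≤ #(F.biUnion box) := by
        refine card_le_card_of_injOn minOfPart (fun P hP ↦ ?_) minOfPart_injective.injOn
        simp only [coe_biUnion, mem_coe, Set.mem_iUnion, exists_prop]
        refine ⟨({x | P.minOfPart x = x} : Finset α), ?_, ?_⟩
        · simp only [F, mem_filter, mem_univ, true_and]
          exact (mem_filter.1 hP).2.trans P.card_parts_le_card_filter_minOfPart_eq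
        · simp only [box, Fintype.mem_piFinset]
          intro x
          split_ifs with hx
          · exact mem_singleton.2 (mem_filter.1 hx).2
          · exact mem_univ _
    _ ≤ ∑ M ∈ F, #(box M) := card_biUnion_le
    _ ≤ ∑ _M ∈ F, n ^ (n - B) := sum_le_sum hbox
    _ ≤ 2 ^ n * n ^ (n - B) := by
        rw [sum_const, smul_eq_mul]
        exact Nat.mul_le_mul_right _ ((card_filter_le _ _).trans (by simp [n]))

theorem card_partitionsWithSingletons_le_succ {j K u : ℕ} (hK : 16 * (j + 2) ≤ K)
    (hu : (4 * K) ^ (2 * K) ≤ u) (hju : j ≤ u) (hlow : K * u ≤ Fintype.card α)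
    (hhigh : Fintype.card α < K * (u + 1)) :
    #(partitionsWithSingletons α j) ≤ #(partitionsWithSingletons α (j + 1)) := by
  set n := Fintype.card α
  have hu1 : 1 ≤ u := le_trans (Nat.one_le_pow _ _ (by omega)) hu
  have hKu : 16 * (j + 2) * u ≤ K * u := Nat.mul_le_mul_right u hK
  set few := {P ∈ partitionsWithSingletons α j | #P.parts ≤ 4 * u}
  have hjun : j + 1 + 2 * u ≤ n := by nlinarith
  set many : Finset (Finpartition (univ : Finset α)) := {P | 4 * u + 1 ≤ #P.parts}
  have hsplit : #(partitionsWithSingletons α j) ≤ #few + #many := by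
    rw [← card_filter_add_card_filter_not (fun P ↦ #P.parts ≤ 4 * u)]
    refine Nat.add_le_add_left (card_le_card fun P hP ↦ ?_) _
    simp only [many, mem_filter, mem_univ, true_and] at hP ⊢
    omega
  have hfew : 2 * #few ≤ #(partitionsWithSingletons α (j + 1)) := by
    have hroom : 2 * ((j + 1) * (4 * u + 1)) ≤ n - 2 * (4 * u) := by
      have : 2 * ((j + 1) * (4 * u + 1)) + 2 * (4 * u) ≤ n := by nlinarith
      omega
    have := (Nat.mul_le_mul_left #few hroom).trans (card_filter_card_parts_le_mul_le j (4 * u))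
    refine Nat.le_of_mul_le_mul_right ?_ (show 0 < (j + 1) * (4 * u + 1) by positivity)
    linarith
  have hmany : 2 * #many ≤ #(partitionsWithSingletons α (j + 1)) :=
    calc 2 * #many ≤ 2 * (2 ^ n * n ^ (n - (4 * u + 1))) :=
          Nat.mul_le_mul_left 2 (card_filter_le_card_parts_le _)
      _ ≤ u ^ (n - (j + 1) - 2 * u) :=
          two_mul_two_pow_mul_pow_le (by omega) hu hju hlow hhigh
      _ ≤ _ := pow_le_card_partitionsWithSingletons (by omega)
  omega

end LinearOrder

theorem succ_mul_card_partitionsWithSingletons_le {α : Type*} [Fintype α] [DecidableEq α]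
    {k K : ℕ} (h : ∀ j < k + K,
      #(partitionsWithSingletons α j) ≤ #(partitionsWithSingletons α (j + 1))) :
    (K + 1) * #(partitionsWithSingletons α k) ≤
      Fintype.card (Finpartition (univ : Finset α)) := by
  have hchain (i : ℕ) (hi : i ≤ K) :
      #(partitionsWithSingletons α k) ≤ #(partitionsWithSingletons α (k + i)) := by
    induction i with
    | zero => rfl
    | succ i ih => exact (ih (by omega)).trans (h (k + i) (by omega))
  calc (K + 1) * #(partitionsWithSingletons α k)
      = ∑ _i ∈ range (K + 1), #(partitionsWithSingletons α k) := by simp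
    _ ≤ ∑ i ∈ range (K + 1), #(partitionsWithSingletons α (k + i)) :=
        sum_le_sum fun i hi ↦ hchain i (Nat.lt_succ_iff.1 (mem_range.1 hi))
    _ = ∑ j ∈ Ico k (k + (K + 1)), #(partitionsWithSingletons α j) := by
        rw [sum_Ico_eq_sum_range, Nat.add_sub_cancel_left]
    _ = #{P : Finpartition (univ : Finset α) | #P.singletonParts ∈ Ico k (k + (K + 1))} :=
        sum_card_fiberwise_eq_card_filter _ _ _
    _ ≤ _ := card_le_univ _

end Finpartition

open Finpartition

theorem eventually_card_partitionsWithSingletons_le_succ (m : ℕ) :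
    ∀ᶠ n in atTop, ∀ j ≤ m,
      #(partitionsWithSingletons (Fin n) j) ≤ #(partitionsWithSingletons (Fin n) (j + 1)) := by
  set K := 16 * (m + 2)
  filter_upwards [eventually_ge_atTop (((4 * K) ^ (2 * K) + m) * K)] with n hn j hj
  have hu : (4 * K) ^ (2 * K) + m ≤ n / K := (Nat.le_div_iff_mul_le (by positivity)).2 hn
  refine card_partitionsWithSingletons_le_succ (K := K) (u := n / K)
    (by omega) (by omega) (by omega) ?_ ?_
  · simpa using Nat.mul_div_le n K
  · simpa using Nat.lt_mul_div_succ n (show 0 < K by positivity)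

theorem partSingletons_eq_card (n k : ℕ) :
    partSingletons n k = #(partitionsWithSingletons (Fin n) k) := by
  rw [partSingletons, Nat.card_eq_fintype_card, Fintype.card_subtype]
  rfl

theorem eventually_succ_mul_partSingletons_le_bell (k K : ℕ) :
    ∀ᶠ n in atTop, (K + 1) * partSingletons n k ≤ bell n := by
  filter_upwards [eventually_card_partitionsWithSingletons_le_succ (k + K)] with n hn
  rw [partSingletons_eq_card, bell, Nat.card_eq_fintype_card]
  exact succ_mul_card_partitionsWithSingletons_le fun j hj ↦ hn j hj.le

/-- For each fixed `k`, the proportion of set partitions of `{1,…,n}` with exactly `k`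
singleton blocks tends to `0` (the `λ = ∞` situation). -/
theorem set_partitions_singletons_ratio (k : ℕ) :
    Tendsto (fun n : ℕ => (partSingletons n k : ℝ) / (bell n : ℝ)) atTop (nhds 0) := by
  refine tendsto_order.2 ⟨fun a ha ↦ .of_forall fun n ↦ ha.trans_le (by positivity),
    fun ε hε ↦ ?_⟩
  obtain ⟨K, hK⟩ := exists_nat_one_div_lt hε
  filter_upwards [eventually_succ_mul_partSingletons_le_bell k K] with n hn
  have hbell : (0 : ℝ) < bell n := by
    rw [bell, Nat.card_eq_fintype_card]
    exact_mod_cast Fintype.card_pos_iff.2 ⟨⊥⟩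
  calc (partSingletons n k : ℝ) / bell n ≤ 1 / (K + 1) := by
        rw [div_le_div_iff₀ hbell (by positivity), one_mul, mul_comm]
        exact_mod_cast hn
    _ < ε := hK
end
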